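/- arXiv:2201.03507 — 7 statements merged into one kernel-verified Lean document; each statement's English description precedes it below -/
import Mathlib

section
/- A function f : X → ℝ is upper pseudo-continuous if and only if for every λ in the range f(X), the superlevel set {x ∈ X : f(x) ≥ λ} is closed. -/
/-- `f` is upper pseudo-continuous iff every superlevel set at a value in the range of `f`
is closed. -/
theorem upper_pseudo_continuous_iff_superlevel_closed
    {X : Type*} [TopologicalSpace X] (f : X → ℝ) :
    (∀ x y : X, f x < f y → ∃ V ∈ nhds x, ∀ x' ∈ V, f x' < f y) ↔
      (∀ l ∈ Set.range f, IsClosed {x : X | l ≤ f x}) := by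
  constructor
  · rintro h l ⟨y, rfl⟩
    rw [← isOpen_compl_iff]
    rw [isOpen_iff_mem_nhds]
    intro x hx
    simp only [Set.mem_compl_iff, Set.mem_setOf_eq, not_le] at hx
    obtain ⟨V, hV, hV'⟩ := h x y hx
    exact Filter.mem_of_superset hV fun x' hx' => by
      simpa [not_le] using hV' x' hx'
  · intro h x y hxy
    have := (h (f y) ⟨y, rfl⟩).isOpen_compl
    refine ⟨_, this.mem_nhds ?_, fun x' hx' => ?_⟩
    · simpa [not_le] using hxy
    · simpa [not_le] using hx'
end

section
/- If h : ℝ → ℝ is strictly monotone increasing on the range of a continuous function u : X → ℝ, then the composition f = h ∘ u is pseudo-continuous (both upper and lower pseudo-continuous). -/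
/-- If `u` is continuous and `h` is strictly increasing on the range of `u`, then
`f = h ∘ u` is pseudo-continuous (both upper and lower pseudo-continuous). -/
theorem comp_strictMonoOn_continuous_pseudo_continuous
    {X : Type*} [TopologicalSpace X] (u : X → ℝ) (h : ℝ → ℝ) (f : X → ℝ)
    (hu : Continuous u) (hmono : StrictMonoOn h (Set.range u))
    (hf : f = h ∘ u) :
    (∀ x y : X, f x < f y → ∃ V ∈ nhds x, ∀ x' ∈ V, f x' < f y) ∧
    (∀ x y : X, f y < f x → ∃ V ∈ nhds x, ∀ x' ∈ V, f y < f x') := by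
  subst hf
  constructor
  · intro x y hxy
    have hux : u x < u y := by
      by_contra hle
      exact absurd (hmono.monotoneOn ⟨y, rfl⟩ ⟨x, rfl⟩ (not_lt.mp hle)) (not_le.mpr hxy)
    refine ⟨u ⁻¹' Set.Iio (u y), (hu.continuousAt).preimage_mem_nhds (Iio_mem_nhds hux), ?_⟩
    intro x' hx'
    exact hmono ⟨x', rfl⟩ ⟨y, rfl⟩ hx'
  · intro x y hxy
    have hux : u y < u x := by
      by_contra hle
      exact absurd (hmono.monotoneOn ⟨x, rfl⟩ ⟨y, rfl⟩ (not_lt.mp hle)) (not_le.mpr hxy)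
    refine ⟨u ⁻¹' Set.Ioi (u y), (hu.continuousAt).preimage_mem_nhds (Ioi_mem_nhds hux), ?_⟩
    intro x' hx'
    exact hmono ⟨y, rfl⟩ ⟨x', rfl⟩ hx'
end

section
/- Let X be a convex subset of a real vector space and f, g : X → ℝ with f ≤ g and g quasi-concave. Then the quasi-concave regularization f_q(x) = sup{λ ∈ ℝ : x ∈ conv({y : f(y) ≥ λ})} is a real-valued function, and f ≤ f_q ≤ g. -/
/-- Quasi-concave regularization: if `f ≤ g` on a convex set `X` and `g` is quasi-concave
on `X`, then `f_q(x) = sup {λ | x ∈ conv {y ∈ X | f y ≥ λ}}` is real-valued (the set is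
nonempty and bounded above for each `x ∈ X`) and `f ≤ f_q ≤ g` on `X`. -/
theorem quasiconcave_regularization_bounds
    {E : Type*} [AddCommGroup E] [Module ℝ E]
    (X : Set E) (hX : Convex ℝ X)
    (f g : E → ℝ)
    (hfg : ∀ x ∈ X, f x ≤ g x)
    (hg : ∀ l : ℝ, Convex ℝ {y ∈ X | l ≤ g y}) :
    ∀ x ∈ X,
      ({l : ℝ | x ∈ convexHull ℝ {y ∈ X | l ≤ f y}}.Nonempty ∧
       BddAbove {l : ℝ | x ∈ convexHull ℝ {y ∈ X | l ≤ f y}}) ∧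
      f x ≤ sSup {l : ℝ | x ∈ convexHull ℝ {y ∈ X | l ≤ f y}} ∧
      sSup {l : ℝ | x ∈ convexHull ℝ {y ∈ X | l ≤ f y}} ≤ g x := by
  intro x hx
  set S : Set ℝ := {l : ℝ | x ∈ convexHull ℝ {y ∈ X | l ≤ f y}} with hS
  have hmem : f x ∈ S := by
    apply subset_convexHull ℝ _
    exact ⟨hx, le_refl _⟩
  have hub : ∀ l ∈ S, l ≤ g x := by
    intro l hl
    have hsub : {y ∈ X | l ≤ f y} ⊆ {y ∈ X | l ≤ g y} := by
      rintro y ⟨hyX, hyf⟩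
      exact ⟨hyX, hyf.trans (hfg y hyX)⟩
    have : x ∈ {y ∈ X | l ≤ g y} := by
      have := convexHull_min hsub (hg l) hl
      exact this
    exact this.2
  have hbdd : BddAbove S := ⟨g x, hub⟩
  refine ⟨⟨⟨f x, hmem⟩, hbdd⟩, le_csSup hbdd hmem, csSup_le ⟨f x, hmem⟩ hub⟩
end

section
/- Let X and Y be topological spaces, T : X ⇉ Y a lower hemicontinuous correspondence, and f : X × Y → ℝ a pseudo-continuous function. Then f is quasi-transfer upper continuous on T: for all (x,y), (x,z) in the graph of T with f(x,y) < f(x,z), there exists a neighbourhood W of (x,y) such that for every (x',y') ∈ W with y' ∈ T(x'), there is z' ∈ T(x') with f(x',y') < f(x',z'). -/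
/-- If `f : X × Y → ℝ` is pseudo-continuous and `T : X ⇉ Y` is lower hemicontinuous,
then `f` is quasi-transfer upper continuous on `T`. -/
theorem pseudo_continuous_quasi_transfer_upper_continuous
    {X Y : Type*} [TopologicalSpace X] [TopologicalSpace Y]
    (T : X → Set Y) (f : X × Y → ℝ)
    (hT : ∀ x : X, ∀ V : Set Y, IsOpen V → (T x ∩ V).Nonempty →
      ∃ U ∈ nhds x, ∀ x' ∈ U, (T x' ∩ V).Nonempty)
    (hfu : ∀ p q : X × Y, f p < f q → ∃ W ∈ nhds p, ∀ p' ∈ W, f p' < f q)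
    (hfl : ∀ p q : X × Y, f q < f p → ∃ W ∈ nhds p, ∀ p' ∈ W, f q < f p') :
    ∀ x : X, ∀ y z : Y, y ∈ T x → z ∈ T x → f (x, y) < f (x, z) →
      ∃ W ∈ nhds (x, y), ∀ p' ∈ W, p'.2 ∈ T p'.1 →
        ∃ z' ∈ T p'.1, f p' < f (p'.1, z') := by
  intro x y z hy hz hlt
  -- First get W₁ ∈ nhds (x,y) and W₂ ∈ nhds (x,z) with f p < f p' for p ∈ W₁, p' ∈ W₂.
  obtain ⟨W₁, hW₁, W₂, hW₂, hsep⟩ :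
      ∃ W₁ ∈ nhds (x, y), ∃ W₂ ∈ nhds (x, z),
        ∀ p ∈ W₁, ∀ p' ∈ W₂, f p < f p' := by
    by_cases hmid : ∃ q : X × Y, f (x, y) < f q ∧ f q < f (x, z)
    · obtain ⟨q, hq1, hq2⟩ := hmid
      obtain ⟨W₁, hW₁, h1⟩ := hfu (x, y) q hq1
      obtain ⟨W₂, hW₂, h2⟩ := hfl (x, z) q hq2
      exact ⟨W₁, hW₁, W₂, hW₂, fun p hp p' hp' => (h1 p hp).trans (h2 p' hp')⟩
    · push_neg at hmid
      obtain ⟨W₁, hW₁, h1⟩ := hfu (x, y) (x, z) hlt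
      obtain ⟨W₂, hW₂, h2⟩ := hfl (x, z) (x, y) hlt
      exact ⟨W₁, hW₁, W₂, hW₂, fun p hp p' hp' =>
        lt_of_lt_of_le (h1 p hp) (hmid p' (h2 p' hp'))⟩
  -- Extract a product neighborhood inside W₂
  rw [mem_nhds_prod_iff] at hW₂
  obtain ⟨U, hU, V, hV, hUV⟩ := hW₂
  obtain ⟨V', hV'sub, hV'open, hzV'⟩ := mem_nhds_iff.mp hV
  -- lower hemicontinuity with V'
  obtain ⟨U₂, hU₂, hU₂prop⟩ := hT x V' hV'open ⟨z, hz, hzV'⟩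
  refine ⟨W₁ ∩ ((U ∩ U₂) ×ˢ Set.univ), ?_, ?_⟩
  · exact Filter.inter_mem hW₁ (prod_mem_nhds (Filter.inter_mem hU hU₂) Filter.univ_mem)
  · rintro ⟨x', y'⟩ ⟨hpW₁, ⟨hxU, hxU₂⟩, -⟩ _
    obtain ⟨z', hz'T, hz'V⟩ := hU₂prop x' hxU₂
    refine ⟨z', hz'T, hsep _ hpW₁ _ (hUV ⟨hxU, hV'sub hz'V⟩)⟩
end

section
/- Let X, Y be topological spaces, T : X ⇉ Y a continuous correspondence with nonempty compact values, and f : X × Y → ℝ pseudo-continuous. Then the value function m(x) = max_{y ∈ T(x)} f(x, y) is well-defined (real-valued) and lower pseudo-continuous: if m(x₁) > m(x₂), there is a neighbourhood U of x₁ with m(x') > m(x₂) for all x' ∈ U. -/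
/-- Morgan–Scalzo–Berge maximum theorem, lower pseudo-continuity part:
for `T` a continuous correspondence with nonempty compact values and `f`
pseudo-continuous, the value function `m x = max_{y ∈ T x} f (x, y)` is well-defined
(the max is attained) and lower pseudo-continuous. -/
theorem value_function_lower_pseudo_continuous
    {X Y : Type*} [TopologicalSpace X] [TopologicalSpace Y]
    (T : X → Set Y) (f : X × Y → ℝ) (m : X → ℝ)
    (hTne : ∀ x, (T x).Nonempty) (hTcomp : ∀ x, IsCompact (T x))
    (hTlhc : ∀ x : X, ∀ V : Set Y, IsOpen V → (T x ∩ V).Nonempty →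
      ∃ U ∈ nhds x, ∀ x' ∈ U, (T x' ∩ V).Nonempty)
    (hTuhc : ∀ x : X, ∀ V : Set Y, IsOpen V → T x ⊆ V →
      ∃ U ∈ nhds x, ∀ x' ∈ U, T x' ⊆ V)
    (hfu : ∀ p q : X × Y, f p < f q → ∃ W ∈ nhds p, ∀ p' ∈ W, f p' < f q)
    (hfl : ∀ p q : X × Y, f q < f p → ∃ W ∈ nhds p, ∀ p' ∈ W, f q < f p')
    (hm : ∀ x, m x = sSup ((fun y => f (x, y)) '' T x)) :
    (∀ x, ∃ y ∈ T x, f (x, y) = m x ∧ ∀ y' ∈ T x, f (x, y') ≤ m x) ∧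
    (∀ x₁ x₂ : X, m x₂ < m x₁ → ∃ U ∈ nhds x₁, ∀ x' ∈ U, m x₂ < m x') := by
  classical
  -- Step 1: the max is attained
  have hmax : ∀ x, ∃ y₀ ∈ T x, ∀ y ∈ T x, f (x, y) ≤ f (x, y₀) := by
    intro x
    by_contra h
    push_neg at h
    choose g hg1 hg2 using h
    have hW : ∀ y (hy : y ∈ T x), ∃ W ∈ nhds (x, y), ∀ p' ∈ W, f p' < f (x, g y hy) :=
      fun y hy => hfu (x, y) (x, g y hy) (hg2 y hy)
    choose W hWnhds hWlt using hW
    have hcont : Continuous (fun z : Y => ((x, z) : X × Y)) :=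
      Continuous.prodMk_right x
    have hUnhds : ∀ y (hy : y ∈ T x),
        (fun z : Y => ((x, z) : X × Y)) ⁻¹' (W y hy) ∈ nhds y :=
      fun y hy => hcont.continuousAt.preimage_mem_nhds (hWnhds y hy)
    obtain ⟨t, ht⟩ := (hTcomp x).elim_nhds_subcover'
      (fun y hy => (fun z : Y => ((x, z) : X × Y)) ⁻¹' (W y hy)) hUnhds
    have htne : t.Nonempty := by
      obtain ⟨y0, hy0⟩ := hTne x
      obtain ⟨s, hs⟩ := Set.mem_iUnion.1 (ht hy0)
      obtain ⟨hst, _⟩ := Set.mem_iUnion.1 hs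
      exact ⟨s, hst⟩
    obtain ⟨b, hbt, hb⟩ := t.exists_max_image (fun y => f (x, g y.1 y.2)) htne
    have hgb : g b.1 b.2 ∈ T x := hg1 b.1 b.2
    obtain ⟨a, ha⟩ := Set.mem_iUnion.1 (ht hgb)
    obtain ⟨hat, hamem⟩ := Set.mem_iUnion.1 ha
    have h1 : f (x, g b.1 b.2) < f (x, g a.1 a.2) := hWlt a.1 a.2 _ hamem
    have h2 : f (x, g a.1 a.2) ≤ f (x, g b.1 b.2) := hb a hat
    exact absurd (h1.trans_le h2) (lt_irrefl _)
  have hmval : ∀ x y₀, y₀ ∈ T x → (∀ y ∈ T x, f (x, y) ≤ f (x, y₀)) →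
      m x = f (x, y₀) := by
    intro x y₀ hy₀ hle
    rw [hm]
    apply le_antisymm
    · apply csSup_le ((hTne x).image _)
      rintro r ⟨y, hy, rfl⟩
      exact hle y hy
    · exact le_csSup ⟨f (x, y₀), by rintro r ⟨y, hy, rfl⟩; exact hle y hy⟩
        ⟨y₀, hy₀, rfl⟩
  have part1 : ∀ x, ∃ y ∈ T x, f (x, y) = m x ∧ ∀ y' ∈ T x, f (x, y') ≤ m x := by
    intro x
    obtain ⟨y₀, hy₀, hle⟩ := hmax x
    have := hmval x y₀ hy₀ hle
    exact ⟨y₀, hy₀, this.symm, fun y' hy' => (hle y' hy').trans this.ge⟩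
  refine ⟨part1, ?_⟩
  intro x₁ x₂ hlt
  obtain ⟨y₁, hy₁, hfy₁, _⟩ := part1 x₁
  obtain ⟨y₂, hy₂, hfy₂, _⟩ := part1 x₂
  have hflt : f (x₂, y₂) < f (x₁, y₁) := by rw [hfy₁, hfy₂]; exact hlt
  obtain ⟨Wn, hWn, hWlt⟩ := hfl (x₁, y₁) (x₂, y₂) hflt
  rw [mem_nhds_prod_iff] at hWn
  obtain ⟨U₁, hU₁, V, hV, hUV⟩ := hWn
  have hy₁V : y₁ ∈ interior V := mem_interior_iff_mem_nhds.2 hV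
  obtain ⟨U₂, hU₂, hU₂p⟩ := hTlhc x₁ (interior V) isOpen_interior ⟨y₁, hy₁, hy₁V⟩
  refine ⟨U₁ ∩ U₂, Filter.inter_mem hU₁ hU₂, ?_⟩
  rintro x' ⟨hx'1, hx'2⟩
  obtain ⟨y', hy'T, hy'V⟩ := hU₂p x' hx'2
  have hmem : ((x', y') : X × Y) ∈ Wn := hUV ⟨hx'1, interior_subset hy'V⟩
  have h1 : f (x₂, y₂) < f (x', y') := hWlt _ hmem
  obtain ⟨-, -, -, hbound⟩ := part1 x'
  calc m x₂ = f (x₂, y₂) := hfy₂.symm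
    _ < f (x', y') := h1
    _ ≤ m x' := hbound y' hy'T
end

section
/- Let X, Y be topological spaces, T : X ⇉ Y a continuous correspondence with nonempty compact values, and f : X × Y → ℝ pseudo-continuous. Then the value function m(x) = max_{y ∈ T(x)} f(x, y) is upper pseudo-continuous: if m(x₁) < m(x₂), there is a neighbourhood U of x₁ such that m(x') < m(x₂) for all x' ∈ U. -/
/-- On a compact nonempty set, an upper pseudo-continuous function attains its max. -/
lemma psc_exists_max {X Y : Type*} [TopologicalSpace X] [TopologicalSpace Y]
    (f : X × Y → ℝ)
    (hfu : ∀ p q : X × Y, f p < f q → ∃ W ∈ nhds p, ∀ p' ∈ W, f p' < f q)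
    (x : X) (s : Set Y) (hne : s.Nonempty) (hcomp : IsCompact s) :
    ∃ y ∈ s, ∀ y' ∈ s, f (x, y') ≤ f (x, y) := by
  by_contra h
  push_neg at h
  choose! z hz hlt using h
  have key : ∀ y ∈ s, ∃ V ∈ nhds y, ∀ y' ∈ V, f (x, y') < f (x, z y) := by
    intro y hy
    obtain ⟨W, hW, hWlt⟩ := hfu (x, y) (x, z y) (hlt y hy)
    refine ⟨(fun y' => (x, y')) ⁻¹' W, ?_, fun y' hy' => hWlt _ hy'⟩
    exact ContinuousAt.preimage_mem_nhds
      ((continuous_const.prodMk continuous_id).continuousAt) hW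
  choose! V hVnhds hVlt using key
  obtain ⟨t, hts, hcov⟩ := hcomp.elim_nhds_subcover V (fun y hy => hVnhds y hy)
  have htne : t.Nonempty := by
    obtain ⟨y0, hy0⟩ := hne
    obtain ⟨i, hi, _⟩ := Set.mem_iUnion₂.mp (hcov hy0)
    exact ⟨i, hi⟩
  obtain ⟨b, hb, hbmax⟩ := t.exists_max_image (fun y => f (x, z y)) htne
  have hzb : z b ∈ s := hz b (hts b hb)
  obtain ⟨i, hi, hzbi⟩ := Set.mem_iUnion₂.mp (hcov hzb)
  exact absurd (lt_of_lt_of_le (hVlt i (hts i hi) _ hzbi) (hbmax i hi)) (lt_irrefl _)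

/-- Morgan–Scalzo–Berge maximum theorem, upper pseudo-continuity part:
for `T` a continuous correspondence with nonempty compact values and `f`
pseudo-continuous, the value function `m x = max_{y ∈ T x} f (x, y)` is well-defined
(the max is attained) and upper pseudo-continuous. -/
theorem value_function_upper_pseudo_continuous
    {X Y : Type*} [TopologicalSpace X] [TopologicalSpace Y]
    (T : X → Set Y) (f : X × Y → ℝ) (m : X → ℝ)
    (hTne : ∀ x, (T x).Nonempty) (hTcomp : ∀ x, IsCompact (T x))
    (hTlhc : ∀ x : X, ∀ V : Set Y, IsOpen V → (T x ∩ V).Nonempty →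
      ∃ U ∈ nhds x, ∀ x' ∈ U, (T x' ∩ V).Nonempty)
    (hTuhc : ∀ x : X, ∀ V : Set Y, IsOpen V → T x ⊆ V →
      ∃ U ∈ nhds x, ∀ x' ∈ U, T x' ⊆ V)
    (hfu : ∀ p q : X × Y, f p < f q → ∃ W ∈ nhds p, ∀ p' ∈ W, f p' < f q)
    (hfl : ∀ p q : X × Y, f q < f p → ∃ W ∈ nhds p, ∀ p' ∈ W, f q < f p')
    (hm : ∀ x, m x = sSup ((fun y => f (x, y)) '' T x)) :
    (∀ x, ∃ y ∈ T x, f (x, y) = m x ∧ ∀ y' ∈ T x, f (x, y') ≤ m x) ∧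
    (∀ x₁ x₂ : X, m x₁ < m x₂ → ∃ U ∈ nhds x₁, ∀ x' ∈ U, m x' < m x₂) := by
  have attain : ∀ x, ∃ y ∈ T x, f (x, y) = m x ∧ ∀ y' ∈ T x, f (x, y') ≤ m x := by
    intro x
    obtain ⟨y, hy, hymax⟩ := psc_exists_max f hfu x (T x) (hTne x) (hTcomp x)
    have hbdd : BddAbove ((fun y => f (x, y)) '' T x) := by
      refine ⟨f (x, y), ?_⟩
      rintro _ ⟨y', hy', rfl⟩
      exact hymax y' hy'
    have hmx : m x = f (x, y) := by
      rw [hm x]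
      refine le_antisymm (csSup_le ((hTne x).image _) ?_) (le_csSup hbdd ⟨y, hy, rfl⟩)
      rintro _ ⟨y', hy', rfl⟩
      exact hymax y' hy'
    exact ⟨y, hy, hmx.symm, fun y' hy' => hmx ▸ hymax y' hy'⟩
  refine ⟨attain, fun x₁ x₂ hlt => ?_⟩
  obtain ⟨y₂, hy₂, hfy₂, _⟩ := attain x₂
  -- for each y ∈ T x₁, f (x₁, y) ≤ m x₁ < m x₂ = f (x₂, y₂)
  have key : ∀ y ∈ T x₁, ∃ UV : Set X × Set Y, IsOpen UV.1 ∧ x₁ ∈ UV.1 ∧ IsOpen UV.2 ∧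
      y ∈ UV.2 ∧ ∀ p ∈ UV.1 ×ˢ UV.2, f p < m x₂ := by
    intro y hy
    obtain ⟨_, _, _, hub₁⟩ := attain x₁
    have : f (x₁, y) < f (x₂, y₂) := lt_of_le_of_lt (hub₁ y hy) (hfy₂ ▸ hlt)
    obtain ⟨W, hW, hWlt⟩ := hfu (x₁, y) (x₂, y₂) this
    obtain ⟨u, v, hu, hxu, hv, hyv, huv⟩ := mem_nhds_prod_iff'.mp hW
    exact ⟨(u, v), hu, hxu, hv, hyv, fun p hp => hfy₂ ▸ hWlt p (huv hp)⟩
  choose! UV hUo hxU hVo hyV hUVlt using key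
  set Us : Y → Set X := fun y => (UV y).1
  set Vs : Y → Set Y := fun y => (UV y).2
  obtain ⟨t, hts, hcov⟩ := (hTcomp x₁).elim_nhds_subcover Vs
    (fun y hy => (hVo y hy).mem_nhds (hyV y hy))
  set Vbig : Set Y := ⋃ y ∈ t, Vs y
  have hVbigopen : IsOpen Vbig := isOpen_biUnion fun y hy => hVo y (hts y hy)
  obtain ⟨U1, hU1, hU1sub⟩ := hTuhc x₁ Vbig hVbigopen hcov
  have hU0 : (⋂ y ∈ t, Us y) ∈ nhds x₁ := by
    refine (isOpen_biInter_finset fun y hy => hUo y (hts y hy)).mem_nhds ?_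
    exact Set.mem_iInter₂.mpr fun y hy => hxU y (hts y hy)
  refine ⟨(⋂ y ∈ t, Us y) ∩ U1, Filter.inter_mem hU0 hU1, ?_⟩
  rintro x' ⟨hx'0, hx'1⟩
  obtain ⟨y', hy', hfy', _⟩ := attain x'
  obtain ⟨i, hi, hy'i⟩ := Set.mem_iUnion₂.mp (hU1sub x' hx'1 hy')
  have hx'i : x' ∈ Us i := Set.mem_iInter₂.mp hx'0 i hi
  calc m x' = f (x', y') := hfy'.symm
    _ < m x₂ := hUVlt i (hts i hi) (x', y') ⟨hx'i, hy'i⟩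
end

section
/- Rader representation characterization: on a topological space X with a countable base, a function f : X → ℝ is upper pseudo-continuous if and only if there exist an upper semicontinuous function u : X → ℝ and a strictly increasing function h : u(X) → ℝ with f = h ∘ u. -/
open Filter Set

noncomputable def raderV (d : ℕ → ℝ) (x : ℝ) : ℝ :=
  ∑' n, if d n ≤ x then (1/2 : ℝ)^n else 0

lemma raderV_summable (d : ℕ → ℝ) (x : ℝ) :
    Summable (fun n => if d n ≤ x then (1/2 : ℝ)^n else 0) := by
  refine Summable.of_nonneg_of_le (fun n => ?_) (fun n => ?_) summable_geometric_two
  · split_ifs <;> positivity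
  · split_ifs
    · exact le_refl _
    · positivity

lemma raderV_mono (d : ℕ → ℝ) : Monotone (raderV d) := by
  intro a b hab
  refine Summable.tsum_le_tsum (fun n => ?_) (raderV_summable d a) (raderV_summable d b)
  by_cases h : d n ≤ a
  · rw [if_pos h, if_pos (h.trans hab)]
  · rw [if_neg h]; split_ifs <;> positivity

lemma raderV_lt (d : ℕ → ℝ) {a b : ℝ} (n : ℕ) (hab : a ≤ b) (h1 : a < d n) (h2 : d n ≤ b) :
    raderV d a < raderV d b := by
  have hpos : (0:ℝ) < (1/2:ℝ)^n := by positivity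
  have hsn : Summable (fun k => if k = n then (1/2:ℝ)^n else 0) :=
    (hasSum_ite_eq n ((1/2:ℝ)^n)).summable
  have key : raderV d a + (1/2:ℝ)^n ≤ raderV d b := by
    have h3 : raderV d a + (1/2:ℝ)^n
        = ∑' k, ((if d k ≤ a then (1/2:ℝ)^k else 0) + (if k = n then (1/2:ℝ)^n else 0)) := by
      rw [Summable.tsum_add (raderV_summable d a) hsn, tsum_ite_eq]
      rfl
    rw [h3]
    refine Summable.tsum_le_tsum (fun k => ?_) ((raderV_summable d a).add hsn) (raderV_summable d b)
    by_cases hk : k = n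
    · subst hk
      rw [if_neg (not_le.mpr h1), if_pos rfl, if_pos h2, zero_add]
    · rw [if_neg hk, add_zero]
      by_cases h4 : d k ≤ a
      · rw [if_pos h4, if_pos (h4.trans hab)]
      · rw [if_neg h4]; split_ifs <;> positivity
  linarith

lemma tsum_tail_halfpow (N : ℕ) :
    ∑' n : ℕ, (if N ≤ n then (1/2:ℝ)^n else 0) = (1/2:ℝ)^N * 2 := by
  have hs : Summable (fun n => if N ≤ n then (1/2:ℝ)^n else 0) := by
    refine Summable.of_nonneg_of_le (fun n => ?_) (fun n => ?_) summable_geometric_two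
    · split_ifs <;> positivity
    · split_ifs
      · exact le_refl _
      · positivity
  rw [← Summable.sum_add_tsum_nat_add N hs]
  have h1 : ∀ i ∈ Finset.range N, (if N ≤ i then (1/2:ℝ)^i else 0) = 0 := by
    intro i hi
    rw [if_neg (not_le.mpr (Finset.mem_range.mp hi))]
  rw [Finset.sum_congr rfl h1, Finset.sum_const, smul_zero, zero_add]
  have h2 : ∀ i : ℕ, (if N ≤ i + N then (1/2:ℝ)^(i+N) else 0) = (1/2:ℝ)^i * (1/2:ℝ)^N := by
    intro i
    rw [if_pos (Nat.le_add_left N i), pow_add]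
  calc ∑' i : ℕ, (if N ≤ i + N then (1/2:ℝ)^(i+N) else 0)
      = ∑' i : ℕ, (1/2:ℝ)^i * (1/2:ℝ)^N := by exact tsum_congr h2
    _ = (∑' i : ℕ, (1/2:ℝ)^i) * (1/2:ℝ)^N := by rw [tsum_mul_right]
    _ = (1/2:ℝ)^N * 2 := by rw [tsum_geometric_two]; ring

lemma raderV_approx (d : ℕ → ℝ) (A : Set ℝ) (hdA : ∀ n, d n ∈ A) (a₀ : ℝ)
    (hS : (A ∩ Set.Ioi a₀).Nonempty)
    (hnomin : ∀ b ∈ A ∩ Set.Ioi a₀, ∃ b' ∈ A ∩ Set.Ioi a₀, b' < b)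
    (ε : ℝ) (hε : 0 < ε) :
    ∃ b ∈ A ∩ Set.Ioi a₀, raderV d b < raderV d a₀ + ε := by
  classical
  set S := A ∩ Set.Ioi a₀ with hSdef
  set t := sInf S with ht
  have hbdd : BddBelow S := ⟨a₀, fun s hs => le_of_lt hs.2⟩
  have hts : ∀ s ∈ S, t ≤ s := fun s hs => csInf_le hbdd hs
  have hgap : ∀ s ∈ A, a₀ < s → t < s := by
    intro s hsA hs
    rcases lt_or_eq_of_le (hts s ⟨hsA, hs⟩) with h | h
    · exact h
    · exfalso
      obtain ⟨b', hb'S, hb'⟩ := hnomin s ⟨hsA, hs⟩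
      exact absurd (hts b' hb'S) (not_le.mpr (h ▸ hb'))
  obtain ⟨N, hN⟩ : ∃ N : ℕ, (1/2:ℝ)^N < ε/2 :=
    exists_pow_lt_of_lt_one (by linarith) (by norm_num)
  have hb : ∃ b ∈ S, ∀ n, n < N → d n ≤ b → d n ≤ t := by
    by_cases hF : ∃ n, n < N ∧ t < d n
    · set F : Finset ℕ := (Finset.range N).filter (fun n => t < d n) with hFdef
      have hFne : F.Nonempty := by
        obtain ⟨n, h1, h2⟩ := hF
        exact ⟨n, by simp [hFdef, Finset.mem_filter, Finset.mem_range, h1, h2]⟩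
      set m := (F.image d).min' (hFne.image d) with hmdef
      have hm_mem : m ∈ F.image d := Finset.min'_mem _ _
      obtain ⟨n₀, hn₀F, hn₀⟩ := Finset.mem_image.mp hm_mem
      have htm : t < m := by
        rw [← hn₀]
        exact (Finset.mem_filter.mp hn₀F).2
      obtain ⟨b, hbS, hbm⟩ := exists_lt_of_csInf_lt hS htm
      refine ⟨b, hbS, fun n hn hdb => ?_⟩
      by_contra h'
      push_neg at h'
      have hnF : n ∈ F := Finset.mem_filter.mpr ⟨Finset.mem_range.mpr hn, h'⟩
      have : m ≤ d n := Finset.min'_le _ _ (Finset.mem_image_of_mem d hnF)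
      linarith
    · push_neg at hF
      obtain ⟨b, hbS⟩ := hS
      exact ⟨b, hbS, fun n hn _ => hF n hn⟩
  obtain ⟨b, hbS, hbP⟩ := hb
  refine ⟨b, hbS, ?_⟩
  have hs2 : Summable (fun n => if N ≤ n then (1/2:ℝ)^n else 0) := by
    refine Summable.of_nonneg_of_le (fun n => ?_) (fun n => ?_) summable_geometric_two
    · split_ifs <;> positivity
    · split_ifs
      · exact le_refl _
      · positivity
  have key : raderV d b ≤ raderV d a₀ + (1/2:ℝ)^N * 2 := by
    have hterm : ∀ n, (if d n ≤ b then (1/2:ℝ)^n else 0)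
        ≤ (if d n ≤ a₀ then (1/2:ℝ)^n else 0) + (if N ≤ n then (1/2:ℝ)^n else 0) := by
      intro n
      by_cases h1 : d n ≤ b
      · rw [if_pos h1]
        by_cases h2 : d n ≤ a₀
        · rw [if_pos h2]
          have : (0:ℝ) ≤ (if N ≤ n then (1/2:ℝ)^n else 0) := by split_ifs <;> positivity
          linarith
        · have h3 : N ≤ n := by
            by_contra h4
            push_neg at h4
            have h5 : d n ≤ t := hbP n h4 h1
            have h6 : a₀ < d n := lt_of_not_ge h2
            exact absurd h5 (not_le.mpr (hgap (d n) (hdA n) h6))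
          rw [if_neg h2, if_pos h3, zero_add]
      · rw [if_neg h1]
        have h5 : (0:ℝ) ≤ (if d n ≤ a₀ then (1/2:ℝ)^n else 0) := by split_ifs <;> positivity
        have h6 : (0:ℝ) ≤ (if N ≤ n then (1/2:ℝ)^n else 0) := by split_ifs <;> positivity
        linarith
    calc raderV d b
        ≤ ∑' n, ((if d n ≤ a₀ then (1/2:ℝ)^n else 0) + (if N ≤ n then (1/2:ℝ)^n else 0)) :=
          Summable.tsum_le_tsum hterm (raderV_summable d b) ((raderV_summable d a₀).add hs2)
      _ = raderV d a₀ + ∑' n, (if N ≤ n then (1/2:ℝ)^n else 0) :=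
          Summable.tsum_add (raderV_summable d a₀) hs2
      _ = raderV d a₀ + (1/2:ℝ)^N * 2 := by rw [tsum_tail_halfpow]
  linarith

/-- Rader representation: on a second-countable topological space, `f : X → ℝ` is upper
pseudo-continuous if and only if it factors as a strictly increasing transformation of an
upper semicontinuous function. -/
theorem rader_representation
    {X : Type*} [TopologicalSpace X] [SecondCountableTopology X]
    (f : X → ℝ) :
    (∀ x y : X, f x < f y → ∃ V ∈ nhds x, ∀ x' ∈ V, f x' < f y) ↔
      ∃ u : X → ℝ, ∃ h : ℝ → ℝ,
        UpperSemicontinuous u ∧ StrictMonoOn h (Set.range u) ∧ f = h ∘ u := by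
  classical
  constructor
  · intro hf
    rcases isEmpty_or_nonempty X with hX | hX
    · exact ⟨fun _ => 0, id, fun x => (IsEmpty.false x).elim, fun a _ b _ hab => hab,
        funext fun x => (IsEmpty.false x).elim⟩
    obtain ⟨x₀⟩ := hX
    -- choice functions
    set P₀ : ℚ → ℚ → Prop := fun p q => ∃ z, z ∈ Set.range f ∧ (p:ℝ) < z ∧ z < (q:ℝ) with hP₀
    set c₀ : ℚ → ℚ → ℝ := fun p q => if h : P₀ p q then h.choose else f x₀ with hc₀
    have hc₀mem : ∀ p q, c₀ p q ∈ Set.range f := by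
      intro p q
      rw [hc₀]
      dsimp only
      split_ifs with h
      · exact h.choose_spec.1
      · exact Set.mem_range_self x₀
    have hc₀spec : ∀ p q, P₀ p q →
        c₀ p q ∈ Set.range f ∧ (p:ℝ) < c₀ p q ∧ c₀ p q < (q:ℝ) := by
      intro p q h
      rw [hc₀]
      dsimp only
      rw [dif_pos h]
      exact h.choose_spec
    set P₁ : ℚ → Prop := fun q => ∃ b, b ∈ Set.range f ∧ (q:ℝ) < b ∧
      ∀ z ∈ Set.range f, ¬((q:ℝ) < z ∧ z < b) with hP₁
    set c₁ : ℚ → ℝ := fun q => if h : P₁ q then h.choose else f x₀ with hc₁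
    have hc₁mem : ∀ q, c₁ q ∈ Set.range f := by
      intro q
      rw [hc₁]
      dsimp only
      split_ifs with h
      · exact h.choose_spec.1
      · exact Set.mem_range_self x₀
    have hc₁spec : ∀ q, P₁ q → c₁ q ∈ Set.range f ∧ (q:ℝ) < c₁ q ∧
        ∀ z ∈ Set.range f, ¬((q:ℝ) < z ∧ z < c₁ q) := by
      intro q h
      rw [hc₁]
      dsimp only
      rw [dif_pos h]
      exact h.choose_spec
    set D : Set ℝ := (Set.range fun pq : ℚ × ℚ => c₀ pq.1 pq.2) ∪ Set.range c₁ with hD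
    have hDsub : D ⊆ Set.range f := by
      rintro e (⟨⟨p, q⟩, rfl⟩ | ⟨q, rfl⟩)
      · exact hc₀mem p q
      · exact hc₁mem q
    have hDc : D.Countable := (Set.countable_range _).union (Set.countable_range _)
    have hDne : D.Nonempty := ⟨c₁ 0, Or.inr ⟨0, rfl⟩⟩
    obtain ⟨d, hd⟩ := hDc.exists_eq_range hDne
    have hdA : ∀ n, d n ∈ Set.range f := by
      intro n
      exact hDsub (hd ▸ Set.mem_range_self n)
    -- separation
    have hSEP : ∀ a ∈ Set.range f, ∀ b ∈ Set.range f, a < b → ∃ n, a < d n ∧ d n ≤ b := by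
      intro a ha b hb hab
      by_cases hz : ∃ z, z ∈ Set.range f ∧ a < z ∧ z < b
      · obtain ⟨z, hzA, haz, hzb⟩ := hz
        obtain ⟨p, hp1, hp2⟩ := exists_rat_btwn haz
        obtain ⟨q, hq1, hq2⟩ := exists_rat_btwn hzb
        have hP : P₀ p q := ⟨z, hzA, hp2, hq1⟩
        obtain ⟨_, h2, h3⟩ := hc₀spec p q hP
        have hmem : c₀ p q ∈ D := Or.inl ⟨(p, q), rfl⟩
        rw [hd] at hmem
        obtain ⟨n, hn⟩ := hmem
        refine ⟨n, ?_, ?_⟩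
        · rw [hn]; exact hp1.trans h2
        · rw [hn]; exact (h3.trans hq2).le
      · obtain ⟨q', hq1, hq2⟩ := exists_rat_btwn hab
        have hP : P₁ q' := by
          refine ⟨b, hb, hq2, fun z hzA hzc => ?_⟩
          exact hz ⟨z, hzA, hq1.trans hzc.1, hzc.2⟩
        obtain ⟨hA', h2, h3⟩ := hc₁spec q' hP
        have hbeq : c₁ q' = b := by
          rcases lt_trichotomy (c₁ q') b with h | h | h
          · exact absurd ⟨c₁ q', hA', hq1.trans h2, h⟩ hz
          · exact h
          · exact absurd ⟨hq2, h⟩ (h3 b hb)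
        have hmem : c₁ q' ∈ D := Or.inr ⟨q', rfl⟩
        rw [hd] at hmem
        obtain ⟨n, hn⟩ := hmem
        refine ⟨n, ?_, ?_⟩
        · rw [hn]; exact hq1.trans h2
        · rw [hn, hbeq]
    have hstrict : ∀ a ∈ Set.range f, ∀ b ∈ Set.range f, a < b → raderV d a < raderV d b := by
      intro a ha b hb hab
      obtain ⟨n, h1, h2⟩ := hSEP a ha b hb hab
      exact raderV_lt d n hab.le h1 h2
    -- the inverse function
    set g : ℝ → ℝ := fun t => sInf {a | a ∈ Set.range f ∧ t ≤ raderV d a} with hg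
    have hinv : ∀ a₀ ∈ Set.range f, g (raderV d a₀) = a₀ := by
      intro a₀ ha₀
      have hlb : ∀ a ∈ {a | a ∈ Set.range f ∧ raderV d a₀ ≤ raderV d a}, a₀ ≤ a := by
        rintro a ⟨haA, hav⟩
        by_contra h'
        push_neg at h'
        exact absurd hav (not_le.mpr (hstrict a haA a₀ ha₀ h'))
      have hmem : a₀ ∈ {a | a ∈ Set.range f ∧ raderV d a₀ ≤ raderV d a} := ⟨ha₀, le_refl _⟩
      exact le_antisymm (csInf_le ⟨a₀, hlb⟩ hmem) (le_csInf ⟨a₀, hmem⟩ hlb)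
    refine ⟨raderV d ∘ f, g, ?_, ?_, ?_⟩
    · -- upper semicontinuity
      intro x c hc
      simp only [Function.comp_apply] at hc ⊢
      by_cases hU : ∃ a, a ∈ Set.range f ∧ c ≤ raderV d a
      · by_cases hmin : ∃ m, (m ∈ Set.range f ∧ c ≤ raderV d m) ∧
            ∀ a, a ∈ Set.range f → c ≤ raderV d a → m ≤ a
        · obtain ⟨m, ⟨⟨y₀, hy₀⟩, hcm⟩, hmlb⟩ := hmin
          have hxm : f x < m := by
            by_contra h'
            push_neg at h'
            exact absurd (hcm.trans (raderV_mono d h')) (not_le.mpr hc)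
          obtain ⟨V, hV, hVlt⟩ := hf x y₀ (by rw [hy₀]; exact hxm)
          refine eventually_iff_exists_mem.mpr ⟨V, hV, fun x' hx' => ?_⟩
          by_contra h'
          push_neg at h'
          have hfx' : f x' < m := by rw [← hy₀]; exact hVlt x' hx'
          exact absurd (hmlb _ (Set.mem_range_self x') h') (not_le.mpr hfx')
        · by_cases hbex : ∃ b, b ∈ Set.range f ∧ f x < b ∧ raderV d b < c
          · obtain ⟨b, ⟨y₀, hy₀⟩, hxb, hbc⟩ := hbex
            obtain ⟨V, hV, hVlt⟩ := hf x y₀ (by rw [hy₀]; exact hxb)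
            refine eventually_iff_exists_mem.mpr ⟨V, hV, fun x' hx' => ?_⟩
            by_contra h'
            push_neg at h'
            have hfx' : f x' < b := by rw [← hy₀]; exact hVlt x' hx'
            exact absurd (h'.trans (raderV_mono d hfx'.le)) (not_le.mpr hbc)
          · exfalso
            push_neg at hbex
            have hUS : ∀ a, a ∈ Set.range f → c ≤ raderV d a → f x < a := by
              intro a haA hac
              by_contra h'
              push_neg at h'
              exact absurd (hac.trans (raderV_mono d h')) (not_le.mpr hc)
            obtain ⟨a₁, ha₁A, ha₁c⟩ := hU
            have hSne : (Set.range f ∩ Set.Ioi (f x)).Nonempty :=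
              ⟨a₁, ha₁A, hUS a₁ ha₁A ha₁c⟩
            have hSnomin : ∀ b ∈ Set.range f ∩ Set.Ioi (f x),
                ∃ b' ∈ Set.range f ∩ Set.Ioi (f x), b' < b := by
              intro b hbS
              by_contra h'
              push_neg at h'
              refine hmin ⟨b, ⟨hbS.1, hbex b hbS.1 hbS.2⟩, ?_⟩
              intro a haA hac
              exact h' a ⟨haA, hUS a haA hac⟩
            have hεpos : 0 < c - raderV d (f x) := by linarith
            obtain ⟨b, hbS, hbv⟩ := raderV_approx d (Set.range f) hdA (f x) hSne hSnomin _ hεpos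
            have := hbex b hbS.1 hbS.2
            linarith
      · push_neg at hU
        refine Filter.Eventually.of_forall (fun x' => ?_)
        by_contra h'
        push_neg at h'
        exact absurd h' (not_le.mpr (hU (f x') (Set.mem_range_self x')))
    · -- strict monotonicity of g on range
      rintro s ⟨x1, hx1⟩ t ⟨x2, hx2⟩ hst
      simp only [Function.comp_apply] at hx1 hx2
      rw [← hx1, ← hx2] at hst ⊢
      rw [hinv (f x1) (Set.mem_range_self x1), hinv (f x2) (Set.mem_range_self x2)]
      by_contra h'
      push_neg at h'
      exact absurd (raderV_mono d h') (not_le.mpr hst)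
    · funext x
      simp only [Function.comp_apply]
      exact (hinv (f x) (Set.mem_range_self x)).symm
  · rintro ⟨u, g, hu, hg, hfu⟩
    intro x y hxy
    have hmono : MonotoneOn g (Set.range u) := hg.monotoneOn
    have hux : u x < u y := by
      by_contra h'
      push_neg at h'
      have : g (u y) ≤ g (u x) := hmono (Set.mem_range_self y) (Set.mem_range_self x) h'
      rw [hfu] at hxy
      simp only [Function.comp_apply] at hxy
      exact absurd hxy (not_lt.mpr this)
    obtain ⟨V, hV, hV'⟩ := Filter.eventually_iff_exists_mem.mp (hu x (u y) hux)
    refine ⟨V, hV, fun x' hx' => ?_⟩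
    rw [hfu]
    simp only [Function.comp_apply]
    exact hg (Set.mem_range_self x') (Set.mem_range_self y) (hV' x' hx')
end
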